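/- arXiv:2302.09383 — 3 statements merged into one kernel-verified Lean document; each statement's English description precedes it below -/
import Mathlib

section
/- Let ν ≥ 3 and let Ψ be a set of coverings with #Ψ ≥ 2 which is neither flat nor a pole, and let E be a nonempty proper subset of Γ_{2ν} with complement E'. Then F_Ψ splits across the bipartition (E,E') if and only if Ψ is criss-cross via E, that is: Ψ is decomposable via E, and for all subsets A₁, B₁, A₂, B₂ with ∅ ≠ A₁ ⊊ E∩A, ∅ ≠ B₁ ⊊ E∩B, ∅ ≠ A₂ ⊊ E'∩A, ∅ ≠ B₂ ⊊ E'∩B, the counting identity u·v = s·w holds, where s = #Ψ, u = #{ψ∈Ψ : ψ(A₁) = B₁}, v = #{ψ∈Ψ : ψ(A₂) = B₂}, and w = #{ψ∈Ψ : ψ(A₁) = B₁ and ψ(A₂) = B₂}. Consequently, F_Ψ splits across no nontrivial bipartition (genuine multipartite entanglement of |Ψ⟩) if and only if Ψ is criss-cross via no nonempty proper E. -/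
open MvPolynomial Finset

noncomputable section

/-- The odd-labelled site `2t−1` of the paper (`t`-th site of sublattice `A`),
zero-indexed as `2t` in `Fin (2ν)`. -/
def siteA (ν : ℕ) (t : Fin ν) : Fin (2 * ν) := ⟨2 * t.val, by have := t.isLt; omega⟩

/-- The even-labelled site `2t` of the paper (`t`-th site of sublattice `B`),
zero-indexed as `2t+1` in `Fin (2ν)`. -/
def siteB (ν : ℕ) (t : Fin ν) : Fin (2 * ν) := ⟨2 * t.val + 1, by have := t.isLt; omega⟩

/-- A covering is a bijection `ψ : A → B`; it is encoded by the permutation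
`σ` of `Fin ν` with `ψ(siteA t) = siteB (σ t)`.  Its covering polynomial is
`F_ψ = ∏_{a∈A} (X_{ψ(a)} − X_a)`. -/
def covPoly (ν : ℕ) (σ : Equiv.Perm (Fin ν)) : MvPolynomial (Fin (2 * ν)) ℂ :=
  ∏ t : Fin ν, (X (siteB ν (σ t)) - X (siteA ν t))

/-- `F` splits across the bipartition `(E, Eᶜ)`. -/
def SplitsAcross {n : ℕ} (F : MvPolynomial (Fin n) ℂ) (E : Finset (Fin n)) : Prop :=
  ∃ p q : MvPolynomial (Fin n) ℂ, F = p * q ∧ p.vars ⊆ E ∧ q.vars ⊆ Eᶜ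

/-- `ψ(E ∩ A) = E ∩ B` for the covering `ψ` encoded by `σ`
(here `E ∩ B` is the set of odd-indexed, i.e. `B`-sublattice, elements of `E`). -/
def MapsCut (ν : ℕ) (σ : Equiv.Perm (Fin ν)) (E : Finset (Fin (2 * ν))) : Prop :=
  ((Finset.univ.filter (fun t => siteA ν t ∈ E)).image fun t => siteB ν (σ t))
    = E.filter (fun x => x.val % 2 = 1)


/-- The (unnormalized) RVB polynomial `F_Ψ = Σ_{ψ∈Ψ} F_ψ`. -/
def rvbPoly (ν : ℕ) (Ψ : Finset (Equiv.Perm (Fin ν))) : MvPolynomial (Fin (2 * ν)) ℂ :=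
  ∑ σ ∈ Ψ, covPoly ν σ

/-- `Ψ` is flat via `E`: decomposable via `E` and all coverings in `Ψ` have the
same restriction to `E' ∩ A`. -/
def FlatVia (ν : ℕ) (Ψ : Finset (Equiv.Perm (Fin ν))) (E : Finset (Fin (2 * ν))) : Prop :=
  (∀ σ ∈ Ψ, MapsCut ν σ E) ∧
  ∀ σ₁ ∈ Ψ, ∀ σ₂ ∈ Ψ, ∀ t : Fin ν, siteA ν t ∉ E → σ₁ t = σ₂ t

/-- `Ψ` is a pole via `E`: decomposable via `E` and all coverings in `Ψ` have the
same restriction to `E ∩ A`. -/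
def PoleVia (ν : ℕ) (Ψ : Finset (Equiv.Perm (Fin ν))) (E : Finset (Fin (2 * ν))) : Prop :=
  (∀ σ ∈ Ψ, MapsCut ν σ E) ∧
  ∀ σ₁ ∈ Ψ, ∀ σ₂ ∈ Ψ, ∀ t : Fin ν, siteA ν t ∈ E → σ₁ t = σ₂ t

/-- `Ψ` is criss-cross via `E`: it is decomposable via `E`, and for all nonempty
proper `A₁ ⊊ E∩A`, `B₁ ⊊ E∩B`, `A₂ ⊊ E'∩A`, `B₂ ⊊ E'∩B` (encoded as subsets
`T₁, U₁, T₂, U₂` of `Fin ν`), the counting identity `u·v = s·w` holds, where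
`u = #{ψ : ψ(A₁)=B₁}`, `v = #{ψ : ψ(A₂)=B₂}`, `w = #{ψ : both}`, `s = #Ψ`. -/
def CrissCrossVia (ν : ℕ) (Ψ : Finset (Equiv.Perm (Fin ν)))
    (E : Finset (Fin (2 * ν))) : Prop :=
  (∀ σ ∈ Ψ, MapsCut ν σ E) ∧
  ∀ T₁ U₁ T₂ U₂ : Finset (Fin ν),
    T₁ ⊆ Finset.univ.filter (fun t => siteA ν t ∈ E) → T₁.Nonempty →
    T₁ ≠ Finset.univ.filter (fun t => siteA ν t ∈ E) →
    U₁ ⊆ Finset.univ.filter (fun u => siteB ν u ∈ E) → U₁.Nonempty →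
    U₁ ≠ Finset.univ.filter (fun u => siteB ν u ∈ E) →
    T₂ ⊆ Finset.univ.filter (fun t => siteA ν t ∉ E) → T₂.Nonempty →
    T₂ ≠ Finset.univ.filter (fun t => siteA ν t ∉ E) →
    U₂ ⊆ Finset.univ.filter (fun u => siteB ν u ∉ E) → U₂.Nonempty →
    U₂ ≠ Finset.univ.filter (fun u => siteB ν u ∉ E) →
    (Ψ.filter (fun σ => T₁.image (fun t => σ t) = U₁)).card *
        (Ψ.filter (fun σ => T₂.image (fun t => σ t) = U₂)).card
      = Ψ.card *
        (Ψ.filter (fun σ =>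
          T₁.image (fun t => σ t) = U₁ ∧ T₂.image (fun t => σ t) = U₂)).card

/-!
Expanding the product, the coefficient in `F_Ψ` of the squarefree monomial with `A`-sites `Kᶜ`
and `B`-sites `S` is `±#{ψ ∈ Ψ : ψ(K) = S}`. If `F_Ψ = p * q` across `(E, E')`, every such
coefficient is a coefficient of `p` times one of `q`, so these counts factor across the cut.
Recombining the factors of the count of a single `ψ` with those of the full count `#Ψ` forces
`E ∩ B ⊆ ψ(E ∩ A)`, hence (by symmetry in `E` and `E'`) decomposability, and recombining four
counts gives `u * v = s * w`.

Conversely, under decomposability `F_ψ = P_ψ * Q_ψ` with `P_ψ` built on `E` and `Q_ψ` on `E'`.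
The criss-cross identities (which hold trivially for the quadruples they exclude) say that for
`K₁ ⊆ E ∩ A` and `K₂ ⊆ E' ∩ A` the images `ψ(K₁)` and `ψ(K₂)` are independent for `ψ` uniform
on `Ψ`; since the coefficients of `P_ψ` and `Q_ψ` depend only on such images, this gives
`#Ψ • ∑ P_ψ * Q_ψ = (∑ P_ψ) * (∑ Q_ψ)`.
-/

section Counting

variable {ι α β : Type*}

theorem card_filter_mul_card_filter_of_const {s : Finset ι} {p : ι → Prop} [DecidablePred p]
    (q : ι → Prop) [DecidablePred q] (hp : (∀ i ∈ s, p i) ∨ ∀ i ∈ s, ¬ p i) :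
    #(s.filter p) * #(s.filter q) = #s * #(s.filter fun i => p i ∧ q i) := by
  rcases hp with hp | hp
  · rw [filter_true_of_mem hp, filter_congr fun i hi => and_iff_right (hp i hi)]
  · rw [filter_false_of_mem hp, filter_false_of_mem (p := fun i => p i ∧ q i) fun i hi hpq =>
      hp i hi hpq.1]
    simp

theorem sum_comp_eq_sum_card_smul [Fintype α] [DecidableEq α] {M : Type*} [AddCommMonoid M]
    (s : Finset ι) (f : ι → α) (φ : α → M) :
    ∑ i ∈ s, φ (f i) = ∑ a, #(s.filter fun i => f i = a) • φ a := by
  rw [← sum_fiberwise s f]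
  refine sum_congr rfl fun a _ => ?_
  rw [← sum_const]
  exact sum_congr rfl fun i hi => by rw [(mem_filter.1 hi).2]

theorem card_smul_sum_mul_eq_sum_mul_sum [Fintype α] [Fintype β] [DecidableEq α] [DecidableEq β]
    {R : Type*} [CommSemiring R] {s : Finset ι} {f : ι → α} {g : ι → β}
    (hfg : ∀ a b, #(s.filter fun i => f i = a) * #(s.filter fun i => g i = b)
      = #s * #(s.filter fun i => f i = a ∧ g i = b))
    (φ : α → R) (χ : β → R) :
    #s • ∑ i ∈ s, φ (f i) * χ (g i) = (∑ i ∈ s, φ (f i)) * ∑ i ∈ s, χ (g i) := by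
  rw [sum_comp_eq_sum_card_smul s (fun i => (f i, g i)) (fun ab => φ ab.1 * χ ab.2),
    sum_comp_eq_sum_card_smul s f, sum_comp_eq_sum_card_smul s g, sum_mul_sum, smul_sum,
    Fintype.sum_prod_type]
  refine sum_congr rfl fun a _ => sum_congr rfl fun b _ => ?_
  simp only [Prod.mk.injEq, smul_smul, smul_mul_smul_comm, hfg]

end Counting

section Images

variable {α : Type*} [DecidableEq α]

theorem nonempty_proper_of_image_eq_of_image_ne {T U W V : Finset α} {σ τ : Equiv.Perm α}
    (hσ : T.image σ = U) (hτ : T.image τ = U) (hW : W ⊆ T) (hσW : W.image σ = V)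
    (hτW : W.image τ ≠ V) :
    W.Nonempty ∧ W ≠ T ∧ V ⊆ U ∧ V.Nonempty ∧ V ≠ U := by
  have hWne : W.Nonempty := by
    rw [nonempty_iff_ne_empty]
    rintro rfl
    rw [image_empty] at hσW hτW
    exact hτW hσW
  have hWT : W ≠ T := by
    rintro rfl
    exact hτW (hτ.trans (hσ.symm.trans hσW))
  refine ⟨hWne, hWT, ?_, hσW ▸ hWne.image _, ?_⟩
  · rw [← hσW, ← hσ]
    exact image_subset_image hW
  · rintro rfl
    exact hWT (image_injective σ.injective (hσW.trans hσ.symm))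

variable [Fintype α]

theorem Equiv.Perm.finset_image_compl (σ : Equiv.Perm α) (K : Finset α) :
    Kᶜ.image σ = (K.image σ)ᶜ := by
  apply Finset.coe_injective
  push_cast
  exact Equiv.image_compl σ K

theorem Finset.union_inter_eq_left_of_subset_compl {X Y Z : Finset α} (hX : X ⊆ Z)
    (hY : Y ⊆ Zᶜ) : (X ∪ Y) ∩ Z = X := by
  rw [union_inter_distrib_right, inter_eq_left.2 hX,
    disjoint_iff_inter_eq_empty.1 (subset_compl_iff_disjoint_right.1 hY), union_empty]

theorem Finset.compl_union_eq_sdiff_union_sdiff {T K₁ K₂ : Finset α} (h₁ : K₁ ⊆ T)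
    (h₂ : K₂ ⊆ Tᶜ) : (K₁ ∪ K₂)ᶜ = (T \ K₁) ∪ (Tᶜ \ K₂) := by
  ext x
  have := @h₁ x
  have := @h₂ x
  simp only [mem_compl, mem_union, mem_sdiff] at *
  tauto

theorem image_union_eq_union_iff {σ : Equiv.Perm α} {T U W₁ V₁ W₂ V₂ : Finset α}
    (hσ : T.image σ = U) (hW₁ : W₁ ⊆ T) (hV₁ : V₁ ⊆ U) (hW₂ : W₂ ⊆ Tᶜ) (hV₂ : V₂ ⊆ Uᶜ) :
    (W₁ ∪ W₂).image σ = V₁ ∪ V₂ ↔ W₁.image σ = V₁ ∧ W₂.image σ = V₂ := by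
  refine ⟨fun h => ⟨?_, ?_⟩, fun h => by rw [image_union, h.1, h.2]⟩
  · rw [← union_inter_eq_left_of_subset_compl hW₁ hW₂, image_inter _ _ σ.injective, h, hσ,
      union_inter_eq_left_of_subset_compl hV₁ hV₂]
  · rw [union_comm W₁, union_comm V₁] at h
    rw [← union_inter_eq_left_of_subset_compl (Y := W₁) hW₂ (by rwa [compl_compl]),
      image_inter _ _ σ.injective, h, σ.finset_image_compl, hσ,
      union_inter_eq_left_of_subset_compl (Y := V₁) hV₂ (by rwa [compl_compl])]

end Images

section Sites

variable {ν : ℕ}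

theorem siteA_injective : Function.Injective (siteA ν) := fun t t' h => by
  have := congrArg Fin.val h; simp only [siteA] at this; exact Fin.ext (by omega)

theorem siteB_injective : Function.Injective (siteB ν) := fun t t' h => by
  have := congrArg Fin.val h; simp only [siteB] at this; exact Fin.ext (by omega)

@[simp]
theorem siteA_ne_siteB (t u : Fin ν) : siteA ν t ≠ siteB ν u := fun h => by
  have := congrArg Fin.val h; simp only [siteA, siteB] at this; omega

@[simp]
theorem siteB_ne_siteA (t u : Fin ν) : siteB ν u ≠ siteA ν t := (siteA_ne_siteB t u).symm

theorem exists_siteB_eq {x : Fin (2 * ν)} (hx : x.val % 2 = 1) : ∃ u, siteB ν u = x :=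
  ⟨⟨x.val / 2, by omega⟩, Fin.ext (by simp only [siteB]; omega)⟩

theorem disjoint_image_siteA_image_siteB (K S : Finset (Fin ν)) :
    Disjoint (K.image (siteA ν)) (S.image (siteB ν)) := by
  simp only [disjoint_left, mem_image]
  rintro _ ⟨t, -, rfl⟩ ⟨u, -, h⟩
  exact siteB_ne_siteA t u h

def sites (ν : ℕ) (K S : Finset (Fin ν)) : Finset (Fin (2 * ν)) :=
  K.image (siteA ν) ∪ S.image (siteB ν)

@[simp]
theorem siteA_mem_sites {K S : Finset (Fin ν)} {t : Fin ν} : siteA ν t ∈ sites ν K S ↔ t ∈ K := by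
  simp [sites, siteA_injective.eq_iff]

@[simp]
theorem siteB_mem_sites {K S : Finset (Fin ν)} {u : Fin ν} : siteB ν u ∈ sites ν K S ↔ u ∈ S := by
  simp [sites, siteB_injective.eq_iff]

theorem sites_inj {K S K' S' : Finset (Fin ν)} :
    sites ν K S = sites ν K' S' ↔ K = K' ∧ S = S' := by
  refine ⟨fun h => ⟨?_, ?_⟩, fun h => by rw [h.1, h.2]⟩ <;> ext x
  · simpa using congrArg (siteA ν x ∈ ·) h
  · simpa using congrArg (siteB ν x ∈ ·) h

theorem sites_union (K₁ S₁ K₂ S₂ : Finset (Fin ν)) :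
    sites ν (K₁ ∪ K₂) (S₁ ∪ S₂) = sites ν K₁ S₁ ∪ sites ν K₂ S₂ := by
  simp only [sites, image_union]
  exact union_union_union_comm _ _ _ _

def cutA (ν : ℕ) (E : Finset (Fin (2 * ν))) : Finset (Fin ν) := univ.filter fun t => siteA ν t ∈ E

def cutB (ν : ℕ) (E : Finset (Fin (2 * ν))) : Finset (Fin ν) := univ.filter fun u => siteB ν u ∈ E

variable {E : Finset (Fin (2 * ν))}

@[simp]
theorem mem_cutA {t : Fin ν} : t ∈ cutA ν E ↔ siteA ν t ∈ E := by simp [cutA]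

@[simp]
theorem mem_cutB {u : Fin ν} : u ∈ cutB ν E ↔ siteB ν u ∈ E := by simp [cutB]

@[simp]
theorem cutA_compl : cutA ν Eᶜ = (cutA ν E)ᶜ := by ext; simp

@[simp]
theorem cutB_compl : cutB ν Eᶜ = (cutB ν E)ᶜ := by ext; simp

theorem compl_cutA : (cutA ν E)ᶜ = univ.filter fun t => siteA ν t ∉ E := by ext; simp

theorem compl_cutB : (cutB ν E)ᶜ = univ.filter fun u => siteB ν u ∉ E := by ext; simp

theorem sites_subset {K S : Finset (Fin ν)} (hK : K ⊆ cutA ν E) (hS : S ⊆ cutB ν E) :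
    sites ν K S ⊆ E := by
  simp only [sites, union_subset_iff, image_subset_iff]
  exact ⟨fun t ht => mem_cutA.1 (hK ht), fun u hu => mem_cutB.1 (hS hu)⟩

theorem mapsCut_iff {σ : Equiv.Perm (Fin ν)} :
    MapsCut ν σ E ↔ (cutA ν E).image σ = cutB ν E := by
  have hB : E.filter (fun x => x.val % 2 = 1) = (cutB ν E).image (siteB ν) := by
    ext x
    simp only [mem_filter, mem_image, mem_cutB]
    constructor
    · rintro ⟨hxE, hx⟩
      obtain ⟨u, rfl⟩ := exists_siteB_eq hx
      exact ⟨u, hxE, rfl⟩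
    · rintro ⟨u, hu, rfl⟩
      exact ⟨hu, by simp [siteB]⟩
  have hA : ((univ.filter fun t => siteA ν t ∈ E).image fun t => siteB ν (σ t))
      = ((cutA ν E).image σ).image (siteB ν) := by
    rw [image_image]; rfl
  rw [MapsCut, hA, hB]
  exact (image_injective siteB_injective).eq_iff

end Sites

section SeparatedProduct

variable {τ R : Type*} [CommSemiring R]

theorem Finsupp.filter_add_of_support_subset [DecidableEq τ] {E F : Finset τ} (hEF : Disjoint E F)
    {x y : τ →₀ ℕ} (hx : x.support ⊆ E) (hy : y.support ⊆ F) :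
    (x + y).filter (· ∈ E) = x := by
  rw [Finsupp.filter_add, (Finsupp.filter_eq_self_iff _ _).2 fun i hi => hx (by simpa using hi),
    (Finsupp.filter_eq_zero_iff _ _).2 fun i hi => ?_, add_zero]
  by_contra h
  exact disjoint_left.1 hEF hi (hy (Finsupp.mem_support_iff.2 h))

theorem coeff_add_mul_of_vars_subset {E F : Finset τ} (hEF : Disjoint E F)
    {p q : MvPolynomial τ R} (hp : p.vars ⊆ E) (hq : q.vars ⊆ F)
    {d₁ d₂ : τ →₀ ℕ} (h₁ : d₁.support ⊆ E) (h₂ : d₂.support ⊆ F) :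
    coeff (d₁ + d₂) (p * q) = coeff d₁ p * coeff d₂ q := by
  classical
  rw [coeff_mul]
  refine sum_eq_single (d₁, d₂) (fun ⟨a, b⟩ hab hne => ?_)
    (fun h => (h (HasAntidiagonal.mem_antidiagonal.2 rfl)).elim)
  rw [HasAntidiagonal.mem_antidiagonal] at hab
  dsimp only at hab ⊢
  by_contra hz
  have ha : a.support ⊆ E :=
    (support_subset_vars_of_mem_support (mem_support_iff.2 (left_ne_zero_of_mul hz))).trans hp
  have hb : b.support ⊆ F :=
    (support_subset_vars_of_mem_support (mem_support_iff.2 (right_ne_zero_of_mul hz))).trans hq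
  have had : a = d₁ := by
    rw [← Finsupp.filter_add_of_support_subset hEF ha hb, hab,
      Finsupp.filter_add_of_support_subset hEF h₁ h₂]
  subst had
  exact hne (by rw [add_left_cancel hab])

end SeparatedProduct

section SquarefreeMonomials

variable {τ R : Type*} [CommSemiring R]

def sqfreeExp (D : Finset τ) : τ →₀ ℕ := Finsupp.indicator D fun _ _ => 1

theorem support_sqfreeExp (D : Finset τ) : (sqfreeExp D).support ⊆ D :=
  Finsupp.support_indicator_subset _ _

theorem sqfreeExp_injective : Function.Injective (sqfreeExp (τ := τ)) := by
  classical
  intro D D' h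
  ext x
  have := DFunLike.congr_fun h x
  simp only [sqfreeExp, Finsupp.indicator_apply] at this
  split_ifs at this <;> simp_all

theorem sqfreeExp_union [DecidableEq τ] {D D' : Finset τ} (h : Disjoint D D') :
    sqfreeExp (D ∪ D') = sqfreeExp D + sqfreeExp D' := by
  ext x
  simp only [sqfreeExp, Finsupp.add_apply, Finsupp.indicator_apply, mem_union]
  split_ifs <;> simp_all [disjoint_left]

theorem coeff_sqfreeExp_prod_X [DecidableEq τ] (D D' : Finset τ) :
    coeff (sqfreeExp D') (∏ x ∈ D, (X x : MvPolynomial τ R)) = if D' = D then 1 else 0 := by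
  have := coeff_prod_X_pow (R := R) (sqfreeExp D') (fun _ => 1) D
  simp only [pow_one] at this
  exact this.trans (if_congr sqfreeExp_injective.eq_iff rfl rfl)

end SquarefreeMonomials

section CoveringPolynomials

variable {ν : ℕ}

def partialCovPoly (ν : ℕ) (σ : Equiv.Perm (Fin ν)) (W : Finset (Fin ν)) :
    MvPolynomial (Fin (2 * ν)) ℂ :=
  ∏ t ∈ W, (X (siteB ν (σ t)) - X (siteA ν t))

theorem covPoly_eq_partialCovPoly_mul (σ : Equiv.Perm (Fin ν)) (W : Finset (Fin ν)) :
    covPoly ν σ = partialCovPoly ν σ W * partialCovPoly ν σ Wᶜ :=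
  (prod_mul_prod_compl W _).symm

theorem partialCovPoly_eq_sum (σ : Equiv.Perm (Fin ν)) (W : Finset (Fin ν)) :
    partialCovPoly ν σ W = ∑ K ∈ W.powerset,
      (-1 : ℂ) ^ #(W \ K) • ∏ x ∈ sites ν (W \ K) (K.image σ), X x := by
  simp only [partialCovPoly, sub_eq_add_neg, prod_add, prod_neg]
  refine sum_congr rfl fun K _ => ?_
  rw [sites, prod_union (disjoint_image_siteA_image_siteB _ _), prod_image siteA_injective.injOn,
    image_image, prod_image (siteB_injective.comp σ.injective).injOn, smul_eq_C_mul]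
  simp only [map_pow, map_neg, map_one, Function.comp_apply]
  ring

def imageCount (Ψ : Finset (Equiv.Perm (Fin ν))) (K S : Finset (Fin ν)) : ℕ :=
  #(Ψ.filter fun σ => K.image (fun t => σ t) = S)

theorem imageCount_ne_zero {Ψ : Finset (Equiv.Perm (Fin ν))} {K S : Finset (Fin ν)} :
    imageCount Ψ K S ≠ 0 ↔ ∃ σ ∈ Ψ, K.image σ = S := by
  simp [imageCount]

theorem coeff_rvbPoly (Ψ : Finset (Equiv.Perm (Fin ν))) (K S : Finset (Fin ν)) :
    coeff (sqfreeExp (sites ν Kᶜ S)) (rvbPoly ν Ψ) = (-1) ^ #Kᶜ * imageCount Ψ K S := by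
  have hcov : ∀ σ : Equiv.Perm (Fin ν), coeff (sqfreeExp (sites ν Kᶜ S)) (covPoly ν σ)
      = if K.image σ = S then (-1) ^ #Kᶜ else 0 := by
    intro σ
    rw [show covPoly ν σ = partialCovPoly ν σ univ from rfl, partialCovPoly_eq_sum, coeff_sum,
      sum_eq_single_of_mem K (mem_powerset.2 (subset_univ K))]
    · simp [coeff_sqfreeExp_prod_X, ← compl_eq_univ_sdiff, sites_inj, eq_comm]
    · intro K' _ hK'
      simp only [coeff_smul, coeff_sqfreeExp_prod_X, smul_eq_mul, mul_ite, mul_one, mul_zero]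
      rw [if_neg fun h => hK' ?_]
      simpa [← compl_eq_univ_sdiff] using (sites_inj.1 h).1.symm
  rw [rvbPoly, coeff_sum, sum_congr rfl fun σ _ => hcov σ, ← sum_filter, sum_const, nsmul_eq_mul,
    mul_comm, imageCount]

theorem norm_coeff_rvbPoly (Ψ : Finset (Equiv.Perm (Fin ν))) (K S : Finset (Fin ν)) :
    ‖coeff (sqfreeExp (sites ν Kᶜ S)) (rvbPoly ν Ψ)‖ = imageCount Ψ K S := by
  simp [coeff_rvbPoly]

end CoveringPolynomials

theorem SplitsAcross.compl {n : ℕ} {F : MvPolynomial (Fin n) ℂ} {E : Finset (Fin n)}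
    (h : SplitsAcross F E) : SplitsAcross F Eᶜ := by
  obtain ⟨p, q, hF, hp, hq⟩ := h
  exact ⟨q, p, by rw [hF, mul_comm], hq, by rwa [compl_compl]⟩

section SplitsImpliesCrissCross

variable {ν : ℕ} {Ψ : Finset (Equiv.Perm (Fin ν))} {E : Finset (Fin (2 * ν))}

theorem exists_imageCount_eq_mul_of_splitsAcross (h : SplitsAcross (rvbPoly ν Ψ) E) :
    ∃ a b : Finset (Fin ν) → Finset (Fin ν) → ℝ, ∀ ⦃K₁ S₁ K₂ S₂⦄, K₁ ⊆ cutA ν E →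
      S₁ ⊆ cutB ν E → K₂ ⊆ (cutA ν E)ᶜ → S₂ ⊆ (cutB ν E)ᶜ →
      (imageCount Ψ (K₁ ∪ K₂) (S₁ ∪ S₂) : ℝ) = a K₁ S₁ * b K₂ S₂ := by
  obtain ⟨p, q, hF, hp, hq⟩ := h
  set T := cutA ν E
  refine ⟨fun K₁ S₁ => ‖coeff (sqfreeExp (sites ν (T \ K₁) S₁)) p‖,
    fun K₂ S₂ => ‖coeff (sqfreeExp (sites ν (Tᶜ \ K₂) S₂)) q‖,
    fun K₁ S₁ K₂ S₂ hK₁ hS₁ hK₂ hS₂ => ?_⟩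
  have hE : sites ν (T \ K₁) S₁ ⊆ E := sites_subset sdiff_subset hS₁
  have hE' : sites ν (Tᶜ \ K₂) S₂ ⊆ Eᶜ :=
    sites_subset (by simp [T]) (by simpa using hS₂)
  rw [← norm_coeff_rvbPoly, compl_union_eq_sdiff_union_sdiff hK₁ hK₂, sites_union,
    sqfreeExp_union (disjoint_compl_right.mono hE hE'), hF,
    coeff_add_mul_of_vars_subset disjoint_compl_right hp hq ((support_sqfreeExp _).trans hE)
      ((support_sqfreeExp _).trans hE'), norm_mul]

theorem cutB_subset_image_of_splitsAcross (h : SplitsAcross (rvbPoly ν Ψ) E)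
    {σ : Equiv.Perm (Fin ν)} (hσ : σ ∈ Ψ) : cutB ν E ⊆ (cutA ν E).image σ := by
  obtain ⟨a, b, hab⟩ := exists_imageCount_eq_mul_of_splitsAcross h
  set T := cutA ν E
  set U := cutB ν E
  set I := T.image σ
  have hσ' : a T (I ∩ U) * b ∅ (I ∩ Uᶜ) ≠ 0 := by
    rw [← hab subset_rfl inter_subset_right (empty_subset _) inter_subset_right, union_empty,
      ← inter_union_distrib_left, union_compl, inter_univ]
    exact_mod_cast imageCount_ne_zero.2 ⟨σ, hσ, rfl⟩
  have hfull : a T U * b Tᶜ Uᶜ ≠ 0 := by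
    rw [← hab subset_rfl subset_rfl subset_rfl subset_rfl, union_compl, union_compl]
    exact_mod_cast imageCount_ne_zero.2 ⟨σ, hσ, image_univ_equiv σ⟩
  -- recombining the factors of these two nonzero counts yields `τ ∈ Ψ` with
  -- `τ(univ) = (I ∩ U) ∪ Uᶜ`
  have hmix : (imageCount Ψ (T ∪ Tᶜ) ((I ∩ U) ∪ Uᶜ) : ℝ) ≠ 0 := by
    rw [hab subset_rfl inter_subset_right subset_rfl subset_rfl]
    exact mul_ne_zero (left_ne_zero_of_mul hσ') (right_ne_zero_of_mul hfull)
  obtain ⟨τ, -, hτ⟩ := imageCount_ne_zero.1 (by exact_mod_cast hmix)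
  rw [union_compl, image_univ_equiv] at hτ
  intro u hu
  have hu' : u ∈ (I ∩ U) ∪ Uᶜ := hτ ▸ mem_univ u
  simpa [hu] using hu'

theorem image_cutA_of_splitsAcross (h : SplitsAcross (rvbPoly ν Ψ) E)
    {σ : Equiv.Perm (Fin ν)} (hσ : σ ∈ Ψ) : (cutA ν E).image σ = cutB ν E := by
  have h' := cutB_subset_image_of_splitsAcross h.compl hσ
  rw [cutA_compl, cutB_compl, σ.finset_image_compl, compl_subset_compl] at h'
  exact h'.antisymm (cutB_subset_image_of_splitsAcross h hσ)

theorem imageCount_union_eq_card_filter {T U W₁ V₁ W₂ V₂ : Finset (Fin ν)}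
    (hd : ∀ σ ∈ Ψ, T.image σ = U) (hW₁ : W₁ ⊆ T) (hV₁ : V₁ ⊆ U) (hW₂ : W₂ ⊆ Tᶜ)
    (hV₂ : V₂ ⊆ Uᶜ) :
    imageCount Ψ (W₁ ∪ W₂) (V₁ ∪ V₂)
      = #(Ψ.filter fun σ => W₁.image (fun t => σ t) = V₁ ∧ W₂.image (fun t => σ t) = V₂) :=
  congrArg card <| filter_congr fun σ hσ => image_union_eq_union_iff (hd σ hσ) hW₁ hV₁ hW₂ hV₂

theorem card_filter_mul_card_filter_of_splitsAcross (h : SplitsAcross (rvbPoly ν Ψ) E)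
    {W₁ V₁ W₂ V₂ : Finset (Fin ν)} (hW₁ : W₁ ⊆ cutA ν E) (hV₁ : V₁ ⊆ cutB ν E)
    (hW₂ : W₂ ⊆ (cutA ν E)ᶜ) (hV₂ : V₂ ⊆ (cutB ν E)ᶜ) :
    #(Ψ.filter fun σ => W₁.image (fun t => σ t) = V₁)
        * #(Ψ.filter fun σ => W₂.image (fun t => σ t) = V₂)
      = #Ψ * #(Ψ.filter fun σ =>
          W₁.image (fun t => σ t) = V₁ ∧ W₂.image (fun t => σ t) = V₂) := by
  obtain ⟨a, b, hab⟩ := exists_imageCount_eq_mul_of_splitsAcross h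
  set T := cutA ν E
  set U := cutB ν E
  have hd : ∀ σ ∈ Ψ, T.image σ = U := fun σ hσ => image_cutA_of_splitsAcross h hσ
  have hd' : ∀ σ ∈ Ψ, Tᶜ.image σ = Uᶜ := fun σ hσ => by rw [σ.finset_image_compl, hd σ hσ]
  have hu : #(Ψ.filter fun σ => W₁.image (fun t => σ t) = V₁)
      = imageCount Ψ (W₁ ∪ Tᶜ) (V₁ ∪ Uᶜ) := by
    rw [imageCount_union_eq_card_filter hd hW₁ hV₁ subset_rfl subset_rfl]
    exact congrArg card <| filter_congr fun σ hσ => (and_iff_left (hd' σ hσ)).symm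
  have hv : #(Ψ.filter fun σ => W₂.image (fun t => σ t) = V₂)
      = imageCount Ψ (T ∪ W₂) (U ∪ V₂) := by
    rw [imageCount_union_eq_card_filter hd subset_rfl subset_rfl hW₂ hV₂]
    exact congrArg card <| filter_congr fun σ hσ => (and_iff_right (hd σ hσ)).symm
  have hs : #Ψ = imageCount Ψ (T ∪ Tᶜ) (U ∪ Uᶜ) := by
    rw [union_compl, union_compl, imageCount, filter_true_of_mem fun σ _ => image_univ_equiv σ]
  rw [hu, hv, hs, ← imageCount_union_eq_card_filter hd hW₁ hV₁ hW₂ hV₂]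
  refine Nat.cast_injective (R := ℝ) ?_
  push_cast
  rw [hab hW₁ hV₁ subset_rfl subset_rfl, hab subset_rfl subset_rfl hW₂ hV₂,
    hab subset_rfl subset_rfl subset_rfl subset_rfl, hab hW₁ hV₁ hW₂ hV₂]
  ring

end SplitsImpliesCrissCross

section CrissCrossImpliesSplits

variable {ν : ℕ} {Ψ : Finset (Equiv.Perm (Fin ν))} {E : Finset (Fin (2 * ν))}

theorem card_filter_mul_card_filter_of_crissCrossVia (h : CrissCrossVia ν Ψ E)
    {K₁ K₂ : Finset (Fin ν)} (hK₁ : K₁ ⊆ cutA ν E) (hK₂ : K₂ ⊆ (cutA ν E)ᶜ)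
    (S₁ S₂ : Finset (Fin ν)) :
    #(Ψ.filter fun σ => K₁.image (fun t => σ t) = S₁)
        * #(Ψ.filter fun σ => K₂.image (fun t => σ t) = S₂)
      = #Ψ * #(Ψ.filter fun σ =>
          K₁.image (fun t => σ t) = S₁ ∧ K₂.image (fun t => σ t) = S₂) := by
  have hd : ∀ σ ∈ Ψ, (cutA ν E).image σ = cutB ν E := fun σ hσ => mapsCut_iff.1 (h.1 σ hσ)
  have hd' : ∀ σ ∈ Ψ, (cutA ν E)ᶜ.image σ = (cutB ν E)ᶜ := fun σ hσ => by
    rw [σ.finset_image_compl, hd σ hσ]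
  by_cases h₁ : (∀ σ ∈ Ψ, K₁.image σ = S₁) ∨ ∀ σ ∈ Ψ, ¬ K₁.image σ = S₁
  · exact card_filter_mul_card_filter_of_const _ h₁
  by_cases h₂ : (∀ σ ∈ Ψ, K₂.image σ = S₂) ∨ ∀ σ ∈ Ψ, ¬ K₂.image σ = S₂
  · rw [mul_comm, card_filter_mul_card_filter_of_const _ h₂]
    simp only [and_comm]
  push Not at h₁ h₂
  obtain ⟨⟨τ₁, hτ₁, hS₁'⟩, σ₁, hσ₁, hS₁⟩ := h₁
  obtain ⟨⟨τ₂, hτ₂, hS₂'⟩, σ₂, hσ₂, hS₂⟩ := h₂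
  obtain ⟨hK₁ne, hK₁T, hS₁U, hS₁ne, hS₁U'⟩ :=
    nonempty_proper_of_image_eq_of_image_ne (hd σ₁ hσ₁) (hd τ₁ hτ₁) hK₁ hS₁ hS₁'
  obtain ⟨hK₂ne, hK₂T, hS₂U, hS₂ne, hS₂U'⟩ :=
    nonempty_proper_of_image_eq_of_image_ne (hd' σ₂ hσ₂) (hd' τ₂ hτ₂) hK₂ hS₂ hS₂'
  rw [compl_cutA] at hK₂ hK₂T
  rw [compl_cutB] at hS₂U hS₂U'
  exact h.2 K₁ S₁ K₂ S₂ hK₁ hK₁ne hK₁T hS₁U hS₁ne hS₁U' hK₂ hK₂ne hK₂T hS₂U hS₂ne hS₂U'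

theorem vars_sum_partialCovPoly_subset {G : Finset (Fin (2 * ν))}
    (hd : ∀ σ ∈ Ψ, (cutA ν G).image σ ⊆ cutB ν G) :
    (∑ σ ∈ Ψ, partialCovPoly ν σ (cutA ν G)).vars ⊆ G := by
  refine (vars_sum_subset _ _).trans <| biUnion_subset.2 fun σ hσ =>
    (vars_prod _).trans <| biUnion_subset.2 fun t ht => (vars_sub_subset _).trans ?_
  rw [vars_X, vars_X, union_subset_iff, singleton_subset_iff, singleton_subset_iff]
  exact ⟨mem_cutB.1 (hd σ hσ (mem_image_of_mem σ ht)), mem_cutA.1 ht⟩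

theorem card_smul_rvbPoly_eq_mul (h : CrissCrossVia ν Ψ E) :
    #Ψ • rvbPoly ν Ψ
      = (∑ σ ∈ Ψ, partialCovPoly ν σ (cutA ν E)) * ∑ σ ∈ Ψ, partialCovPoly ν σ (cutA ν E)ᶜ := by
  set T := cutA ν E
  let φ (W K S : Finset (Fin ν)) : MvPolynomial (Fin (2 * ν)) ℂ :=
    (-1 : ℂ) ^ #(W \ K) • ∏ x ∈ sites ν (W \ K) S, X x
  calc #Ψ • rvbPoly ν Ψ
      = #Ψ • ∑ σ ∈ Ψ, ∑ K₁ ∈ T.powerset, ∑ K₂ ∈ Tᶜ.powerset,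
          φ T K₁ (K₁.image σ) * φ Tᶜ K₂ (K₂.image σ) := by
        simp only [rvbPoly, covPoly_eq_partialCovPoly_mul _ T, partialCovPoly_eq_sum, sum_mul_sum,
          φ]
    _ = ∑ K₁ ∈ T.powerset, ∑ K₂ ∈ Tᶜ.powerset,
          #Ψ • ∑ σ ∈ Ψ, φ T K₁ (K₁.image σ) * φ Tᶜ K₂ (K₂.image σ) := by
        rw [sum_comm]
        simp_rw [sum_comm (s := Ψ), smul_sum]
    _ = ∑ K₁ ∈ T.powerset, ∑ K₂ ∈ Tᶜ.powerset,
          (∑ σ ∈ Ψ, φ T K₁ (K₁.image σ)) * ∑ σ ∈ Ψ, φ Tᶜ K₂ (K₂.image σ) :=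
        sum_congr rfl fun K₁ hK₁ => sum_congr rfl fun K₂ hK₂ =>
          card_smul_sum_mul_eq_sum_mul_sum (card_filter_mul_card_filter_of_crissCrossVia h
            (mem_powerset.1 hK₁) (mem_powerset.1 hK₂)) _ _
    _ = _ := by
        rw [← sum_mul_sum, sum_comm (s := T.powerset), sum_comm (s := Tᶜ.powerset)]
        simp only [partialCovPoly_eq_sum, φ]

theorem splitsAcross_of_crissCrossVia (h : CrissCrossVia ν Ψ E) :
    SplitsAcross (rvbPoly ν Ψ) E := by
  rcases Ψ.eq_empty_or_nonempty with rfl | hΨ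
  · exact ⟨0, 0, by simp [rvbPoly], by simp, by simp⟩
  have hd : ∀ σ ∈ Ψ, (cutA ν E).image σ = cutB ν E := fun σ hσ => mapsCut_iff.1 (h.1 σ hσ)
  have hs : (#Ψ : ℂ) ≠ 0 := Nat.cast_ne_zero.2 hΨ.card_pos.ne'
  refine ⟨∑ σ ∈ Ψ, partialCovPoly ν σ (cutA ν E),
    C (#Ψ : ℂ)⁻¹ * ∑ σ ∈ Ψ, partialCovPoly ν σ (cutA ν E)ᶜ, ?_,
    vars_sum_partialCovPoly_subset fun σ hσ => (hd σ hσ).subset, ?_⟩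
  · rw [mul_left_comm, ← card_smul_rvbPoly_eq_mul h, nsmul_eq_mul, ← mul_assoc,
      ← map_natCast C, ← map_mul, inv_mul_cancel₀ hs, map_one, one_mul]
  · rw [vars_C_mul _ (inv_ne_zero hs), ← cutA_compl]
    refine vars_sum_partialCovPoly_subset fun σ hσ => ?_
    rw [cutA_compl, cutB_compl, σ.finset_image_compl, hd σ hσ]

end CrissCrossImpliesSplits

theorem splitsAcross_rvbPoly_iff_crissCrossVia {ν : ℕ} {Ψ : Finset (Equiv.Perm (Fin ν))}
    {E : Finset (Fin (2 * ν))} : SplitsAcross (rvbPoly ν Ψ) E ↔ CrissCrossVia ν Ψ E := by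
  refine ⟨fun h => ⟨fun σ hσ => mapsCut_iff.2 (image_cutA_of_splitsAcross h hσ), ?_⟩,
    splitsAcross_of_crissCrossVia⟩
  intro T₁ U₁ T₂ U₂ hT₁ _ _ hU₁ _ _ hT₂ _ _ hU₂ _ _
  rw [← compl_cutA] at hT₂
  rw [← compl_cutB] at hU₂
  exact card_filter_mul_card_filter_of_splitsAcross h hT₁ hU₁ hT₂ hU₂

theorem stmt_15_general (ν : ℕ) (Ψ : Finset (Equiv.Perm (Fin ν))) :
    (∀ E : Finset (Fin (2 * ν)), E.Nonempty → E ≠ Finset.univ →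
        (SplitsAcross (rvbPoly ν Ψ) E ↔ CrissCrossVia ν Ψ E)) ∧
    ((∀ E : Finset (Fin (2 * ν)), E.Nonempty → E ≠ Finset.univ →
          ¬ SplitsAcross (rvbPoly ν Ψ) E)
      ↔ (∀ E : Finset (Fin (2 * ν)), E.Nonempty → E ≠ Finset.univ →
          ¬ CrissCrossVia ν Ψ E)) := by
  simp only [splitsAcross_rvbPoly_iff_crissCrossVia, implies_true, true_and]

/-- Theorem 3.7: for `Ψ` neither flat nor a pole, `F_Ψ` splits
across a nontrivial bipartition `(E,E')` iff `Ψ` is criss-cross via `E`;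
consequently, `F_Ψ` splits across no nontrivial bipartition iff `Ψ` is criss-cross
via no nonempty proper `E`. -/
theorem stmt_15 (ν : ℕ) (hν : 3 ≤ ν) (Ψ : Finset (Equiv.Perm (Fin ν)))
    (hΨ : 2 ≤ Ψ.card)
    (hnotflat : ¬ ∃ E : Finset (Fin (2 * ν)), E.Nonempty ∧ E ≠ Finset.univ ∧ FlatVia ν Ψ E)
    (hnotpole : ¬ ∃ E : Finset (Fin (2 * ν)), E.Nonempty ∧ E ≠ Finset.univ ∧ PoleVia ν Ψ E) :
    (∀ E : Finset (Fin (2 * ν)), E.Nonempty → E ≠ Finset.univ →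
        (SplitsAcross (rvbPoly ν Ψ) E ↔ CrissCrossVia ν Ψ E)) ∧
    ((∀ E : Finset (Fin (2 * ν)), E.Nonempty → E ≠ Finset.univ →
          ¬ SplitsAcross (rvbPoly ν Ψ) E)
      ↔ (∀ E : Finset (Fin (2 * ν)), E.Nonempty → E ≠ Finset.univ →
          ¬ CrissCrossVia ν Ψ E)) :=
  stmt_15_general ν Ψ
end
end

section
/- A natural number x admits a criss-cross decomposition, i.e., there exist positive integers x₁, x₂, x₃, x₄ with x = x₁ + x₂ + x₃ + x₄ and x₂·x₃ = x₁·x₄, if and only if x is composite, i.e., x = p·q for some integers p ≥ 2 and q ≥ 2. Moreover, every criss-cross decomposition arises from a factorization: if x = x₁ + x₂ + x₃ + x₄ with all xᵢ ≥ 1 and x₂x₃ = x₁x₄, then there exist integers p ≥ 2, q ≥ 2 and 1 ≤ p₁ < p, 1 ≤ q₁ < q with x = pq, x₁ = p₁q₁, x₂ = p₁(q−q₁), x₃ = (p−p₁)q₁, and x₄ = (p−p₁)(q−q₁). -/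
private lemma cc_aux (x x₁ x₂ x₃ x₄ : ℕ) (h1 : 0 < x₁) (h2 : 0 < x₂) (h3 : 0 < x₃)
    (h4 : 0 < x₄) (hsum : x = x₁ + x₂ + x₃ + x₄) (hcc : x₂ * x₃ = x₁ * x₄) :
    ∃ p q p₁ q₁ : ℕ, 2 ≤ p ∧ 2 ≤ q ∧ 1 ≤ p₁ ∧ p₁ < p ∧ 1 ≤ q₁ ∧ q₁ < q ∧
      x = p * q ∧ x₁ = p₁ * q₁ ∧ x₂ = p₁ * (q - q₁) ∧
      x₃ = (p - p₁) * q₁ ∧ x₄ = (p - p₁) * (q - q₁) := by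
  obtain ⟨a, b, hcop, ha, hb⟩ := Nat.exists_coprime x₁ x₂
  set G := Nat.gcd x₁ x₂ with hGdef
  have hGpos : 0 < G := Nat.gcd_pos_of_pos_left _ h1
  clear_value G
  have hapos : 0 < a := by
    rcases Nat.eq_zero_or_pos a with h | h
    · rw [h, zero_mul] at ha; omega
    · exact h
  have hbpos : 0 < b := by
    rcases Nat.eq_zero_or_pos b with h | h
    · rw [h, zero_mul] at hb; omega
    · exact h
  have key : b * x₃ = a * x₄ := by
    refine Nat.eq_of_mul_eq_mul_right hGpos ?_
    calc b * x₃ * G = (b * G) * x₃ := by ring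
      _ = (a * G) * x₄ := by rw [← ha, ← hb]; exact hcc
      _ = a * x₄ * G := by ring
  have hax3 : a ∣ x₃ := by
    have hdvd : a ∣ b * x₃ := ⟨x₄, key⟩
    exact (Nat.Coprime.dvd_of_dvd_mul_left hcop hdvd)
  obtain ⟨c, hc⟩ := hax3
  have hcpos : 0 < c := by
    rcases Nat.eq_zero_or_pos c with h | h
    · rw [h, mul_zero] at hc; omega
    · exact h
  have hx4 : x₄ = b * c := by
    refine Nat.eq_of_mul_eq_mul_left hapos ?_
    rw [← key, hc]; ring
  refine ⟨G + c, a + b, G, a, by omega, by omega, hGpos, by omega, hapos, by omega,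
    ?_, ?_, ?_, ?_, ?_⟩
  · rw [hsum, ha, hb, hc, hx4]; ring
  · rw [ha, mul_comm]
  · rw [hb, Nat.add_sub_cancel_left, mul_comm]
  · rw [hc, Nat.add_sub_cancel_left, mul_comm]
  · rw [hx4, Nat.add_sub_cancel_left, Nat.add_sub_cancel_left, mul_comm]

/-- Section 3, items (8)(c),(d): a natural number admits a
criss-cross decomposition iff it is composite, and every criss-cross decomposition
arises from a factorization in the stated explicit way. -/
theorem stmt_16 (x : ℕ) :
    ((∃ x₁ x₂ x₃ x₄ : ℕ, 0 < x₁ ∧ 0 < x₂ ∧ 0 < x₃ ∧ 0 < x₄ ∧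
        x = x₁ + x₂ + x₃ + x₄ ∧ x₂ * x₃ = x₁ * x₄)
      ↔ ∃ p q : ℕ, 2 ≤ p ∧ 2 ≤ q ∧ x = p * q) ∧
    (∀ x₁ x₂ x₃ x₄ : ℕ, 0 < x₁ → 0 < x₂ → 0 < x₃ → 0 < x₄ →
      x = x₁ + x₂ + x₃ + x₄ → x₂ * x₃ = x₁ * x₄ →
      ∃ p q p₁ q₁ : ℕ, 2 ≤ p ∧ 2 ≤ q ∧ 1 ≤ p₁ ∧ p₁ < p ∧ 1 ≤ q₁ ∧ q₁ < q ∧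
        x = p * q ∧ x₁ = p₁ * q₁ ∧ x₂ = p₁ * (q - q₁) ∧
        x₃ = (p - p₁) * q₁ ∧ x₄ = (p - p₁) * (q - q₁)) := by
  constructor
  · constructor
    · rintro ⟨x₁, x₂, x₃, x₄, h1, h2, h3, h4, hsum, hcc⟩
      obtain ⟨p, q, _, _, hp2, hq2, _, _, _, _, hx, _⟩ := cc_aux x x₁ x₂ x₃ x₄ h1 h2 h3 h4 hsum hcc
      exact ⟨p, q, hp2, hq2, hx⟩
    · rintro ⟨p, q, hp, hq, rfl⟩
      obtain ⟨p', rfl⟩ := Nat.exists_eq_add_of_le hp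
      obtain ⟨q', rfl⟩ := Nat.exists_eq_add_of_le hq
      exact ⟨1, 1 + q', 1 + p', (1 + p') * (1 + q'), one_pos, by omega, by omega,
        by positivity, by ring, by ring⟩
  · exact fun x₁ x₂ x₃ x₄ h1 h2 h3 h4 hsum hcc => cc_aux x x₁ x₂ x₃ x₄ h1 h2 h3 h4 hsum hcc
end

section
/- Let ν ≥ 2, let μ satisfy 1 ≤ μ ≤ ν−1, let Ψ be a nonempty finite set of coverings, and let α : Ψ → ℂ ∖ {0} be weights whose sum α̂ = Σ_{ψ∈Ψ} α(ψ) is nonzero. Define the weighted doped RVB polynomial F^h_α = Σ_{ψ∈Ψ} α(ψ) · Σ_{R ⊆ A, #R = μ} ∏_{a∈R}(X_{ψ(a)} − X_a) in ℂ[X_1,…,X_{2ν}]. Then F^h_α ≠ 0 and F^h_α splits across no nontrivial bipartition of Γ_{2ν}; i.e., the generalized doped RVB state |α⟩_h is genuinely multipartite entangled. -/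
open MvPolynomial Finset

noncomputable section

/-- The weighted doped RVB polynomial with `μ` resonants (`γ = ν − μ` holes):
`F^h_α = Σ_{ψ∈Ψ} α(ψ) · Σ_{R ⊆ A, #R = μ} ∏_{a∈R} (X_{ψ(a)} − X_a)`. -/
def weightedDopedPoly (ν μ : ℕ) (Ψ : Finset (Equiv.Perm (Fin ν)))
    (α : Equiv.Perm (Fin ν) → ℂ) : MvPolynomial (Fin (2 * ν)) ℂ :=
  ∑ σ ∈ Ψ, C (α σ) *
    ∑ R ∈ Finset.powersetCard μ (Finset.univ : Finset (Fin ν)),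
      ∏ t ∈ R, (X (siteB ν (σ t)) - X (siteA ν t))

/-! ### Auxiliary machinery -/

section Aux

/-- Log-concavity-type strict inequality for binomial coefficients. -/
lemma RVB.choose_ineq (n k : ℕ) (h : k + 1 ≤ n) :
    Nat.choose (n+2) (k+2) * Nat.choose n k < Nat.choose (n+1) (k+1) ^ 2 := by
  set a := Nat.choose n k with ha
  set b := Nat.choose (n+1) (k+1) with hb
  set c := Nat.choose (n+2) (k+2) with hc
  have h1 : (n+2) * b = c * (k+2) := Nat.add_one_mul_choose_eq (n+1) (k+1)
  have h2 : (n+1) * a = b * (k+1) := Nat.add_one_mul_choose_eq n k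
  have hbpos : 0 < b := Nat.choose_pos (by omega)
  have e : c * a * ((k+2)*(n+1)) = b * b * ((n+2)*(k+1)) := by
    calc c * a * ((k+2)*(n+1)) = (c*(k+2)) * ((n+1)*a) := by ring
    _ = ((n+2)*b) * (b*(k+1)) := by rw [← h1, ← h2]
    _ = b * b * ((n+2)*(k+1)) := by ring
  have hfac : (n+2)*(k+1) < (k+2)*(n+1) := by nlinarith
  have hlt : c * a * ((k+2)*(n+1)) < b * b * ((k+2)*(n+1)) := by
    rw [e]
    exact Nat.mul_lt_mul_of_le_of_lt (le_refl _) hfac (by positivity)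
  have := Nat.lt_of_mul_lt_mul_right hlt
  nlinarith [this]

lemma RVB.aux_card_mem {ι : Type*} [DecidableEq ι] (S : Finset ι) (u : ι) (hu : u ∈ S) (k : ℕ)
    (p : Finset ι → Prop) [DecidablePred p] (hp : ∀ R, p (insert u R) ↔ p R) :
    ((Finset.powersetCard (k+1) S).filter (fun R => u ∈ R ∧ p R)).card
      = ((Finset.powersetCard k (S.erase u)).filter p).card := by
  apply Finset.card_bij (fun R _ => R.erase u)
  · intro R hR
    simp only [mem_filter, mem_powersetCard] at hR ⊢
    obtain ⟨⟨hsub, hcard⟩, hmem, hpR⟩ := hR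
    refine ⟨⟨Finset.erase_subset_erase u hsub, by rw [Finset.card_erase_of_mem hmem, hcard]; rfl⟩, ?_⟩
    have : p (insert u (R.erase u)) ↔ p (R.erase u) := hp _
    rw [Finset.insert_erase hmem] at this; exact this.mp hpR
  · intro R1 h1 R2 h2 he
    simp only [mem_filter] at h1 h2
    rw [← Finset.insert_erase h1.2.1, ← Finset.insert_erase h2.2.1, he]
  · intro R' hR'
    simp only [mem_filter, mem_powersetCard] at hR'
    obtain ⟨⟨hsub, hcard⟩, hpR⟩ := hR'
    have hu' : u ∉ R' := fun h => (Finset.mem_erase.mp (hsub h)).1 rfl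
    refine ⟨insert u R', ?_, Finset.erase_insert hu'⟩
    simp only [mem_filter, mem_powersetCard]
    exact ⟨⟨Finset.insert_subset hu ((Finset.subset_erase.mp hsub).1.trans (by rfl)),
      by rw [Finset.card_insert_of_notMem hu', hcard]⟩, Finset.mem_insert_self u R', (hp R').mpr hpR⟩

lemma RVB.cardMs (ν k : ℕ) (s : Fin ν) :
    ((Finset.powersetCard (k+1) (Finset.univ : Finset (Fin ν))).filter (fun R => s ∈ R)).card
      = Nat.choose (ν-1) k := by
  have h := RVB.aux_card_mem (Finset.univ : Finset (Fin ν)) s (mem_univ s) k (fun _ => True)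
    (fun _ => Iff.rfl)
  simp only [and_true, Finset.filter_true] at h
  rw [h, Finset.card_powersetCard, Finset.card_erase_of_mem (mem_univ s), Finset.card_univ,
    Fintype.card_fin]

lemma RVB.cardM11_succ (ν k : ℕ) (s u : Fin ν) (hsu : s ≠ u) :
    ((Finset.powersetCard (k+2) (Finset.univ : Finset (Fin ν))).filter
      (fun R => s ∈ R ∧ u ∈ R)).card = Nat.choose (ν-2) k := by
  have h1 := RVB.aux_card_mem (Finset.univ : Finset (Fin ν)) s (mem_univ s) (k+1)
    (fun R => u ∈ R) (fun R => by simp [Finset.mem_insert, (Ne.symm hsu)])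
  have hu' : u ∈ (Finset.univ : Finset (Fin ν)).erase s :=
    Finset.mem_erase.mpr ⟨Ne.symm hsu, mem_univ u⟩
  have h2 := RVB.aux_card_mem ((Finset.univ : Finset (Fin ν)).erase s) u hu' k (fun _ => True)
    (fun _ => Iff.rfl)
  simp only [and_true, Finset.filter_true] at h2
  rw [h1, h2, Finset.card_powersetCard, Finset.card_erase_of_mem hu',
    Finset.card_erase_of_mem (mem_univ s), Finset.card_univ, Fintype.card_fin, Nat.sub_sub]

lemma RVB.cardM11_one (ν : ℕ) (s u : Fin ν) (hsu : s ≠ u) :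
    ((Finset.powersetCard 1 (Finset.univ : Finset (Fin ν))).filter
      (fun R => s ∈ R ∧ u ∈ R)).card = 0 := by
  have h1 := RVB.aux_card_mem (Finset.univ : Finset (Fin ν)) s (mem_univ s) 0
    (fun R => u ∈ R) (fun R => by simp [Finset.mem_insert, (Ne.symm hsu)])
  rw [h1]
  simp [Finset.powersetCard_zero, Finset.filter_singleton]

lemma RVB.counts_lt (ν μ : ℕ) (hν : 2 ≤ ν) (hμ : 1 ≤ μ) (hμ' : μ ≤ ν - 1)
    (s u : Fin ν) (hsu : s ≠ u) :
    (Finset.powersetCard μ (Finset.univ : Finset (Fin ν))).card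
      * ((Finset.powersetCard μ (Finset.univ : Finset (Fin ν))).filter
          (fun R => s ∈ R ∧ u ∈ R)).card
    < ((Finset.powersetCard μ (Finset.univ : Finset (Fin ν))).filter (fun R => s ∈ R)).card
      * ((Finset.powersetCard μ (Finset.univ : Finset (Fin ν))).filter (fun R => u ∈ R)).card := by
  have hM : (Finset.powersetCard μ (Finset.univ : Finset (Fin ν))).card = Nat.choose ν μ := by
    rw [Finset.card_powersetCard, Finset.card_univ, Fintype.card_fin]
  obtain ⟨k, rfl⟩ : ∃ k, μ = k + 1 := ⟨μ - 1, by omega⟩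
  rw [hM, RVB.cardMs ν k s, RVB.cardMs ν k u]
  cases k with
  | zero =>
    rw [RVB.cardM11_one ν s u hsu]
    simpa using Nat.choose_pos (show 0 ≤ ν - 1 by omega)
  | succ k =>
    rw [RVB.cardM11_succ ν k s u hsu]
    have h2 : ν - 2 + 2 = ν := by omega
    have h1 : ν - 2 + 1 = ν - 1 := by omega
    have := RVB.choose_ineq (ν-2) k (by omega)
    rw [h2, h1] at this
    nlinarith [this]

/-- The basic one-cycle evaluation sum. -/
def RVB.Tsum (ν μ : ℕ) (s u : Fin ν) (v w : ℂ) : ℂ :=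
  ∑ R ∈ Finset.powersetCard μ (Finset.univ : Finset (Fin ν)),
    ∏ t ∈ R, (if t = s then v else if t = u then w else 1)

lemma RVB.Tsum_expand (ν μ : ℕ) (s u : Fin ν) (hsu : s ≠ u) (v w : ℂ) :
    RVB.Tsum ν μ s u v w
    = (v-1)*(w-1)*(((Finset.powersetCard μ (Finset.univ : Finset (Fin ν))).filter
          (fun R => s ∈ R ∧ u ∈ R)).card : ℂ)
      + (v-1)*(((Finset.powersetCard μ (Finset.univ : Finset (Fin ν))).filter
          (fun R => s ∈ R)).card : ℂ)
      + (w-1)*(((Finset.powersetCard μ (Finset.univ : Finset (Fin ν))).filter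
          (fun R => u ∈ R)).card : ℂ)
      + ((Finset.powersetCard μ (Finset.univ : Finset (Fin ν))).card : ℂ) := by
  unfold RVB.Tsum
  have hterm : ∀ R : Finset (Fin ν),
      ∏ t ∈ R, (if t = s then v else if t = u then w else 1)
      = (v-1)*(w-1)*(if s ∈ R ∧ u ∈ R then 1 else 0)
        + (v-1)*(if s ∈ R then 1 else 0) + (w-1)*(if u ∈ R then 1 else 0) + 1 := by
    intro R
    have h1 : ∀ t : Fin ν, (if t = s then v else if t = u then w else 1)
        = (if t = s then v else 1) * (if t = u then w else 1) := by
      intro t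
      by_cases h1 : t = s
      · subst h1; simp [hsu]
      · by_cases h2 : t = u <;> simp [h1, h2, Ne.symm hsu]
    rw [Finset.prod_congr rfl (fun t _ => h1 t), Finset.prod_mul_distrib,
      Finset.prod_ite_eq' R s (fun _ => v), Finset.prod_ite_eq' R u (fun _ => w)]
    by_cases hs : s ∈ R <;> by_cases hu : u ∈ R <;> simp [hs, hu] <;> ring
  rw [Finset.sum_congr rfl (fun R _ => hterm R)]
  rw [Finset.sum_add_distrib, Finset.sum_add_distrib, Finset.sum_add_distrib]
  rw [← Finset.mul_sum, ← Finset.mul_sum, ← Finset.mul_sum]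
  rw [Finset.sum_boole, Finset.sum_boole, Finset.sum_boole, Finset.sum_const]
  push_cast
  ring

lemma RVB.counts_contra (ν μ : ℕ) (hν : 2 ≤ ν) (hμ : 1 ≤ μ) (hμ' : μ ≤ ν - 1)
    (s u : Fin ν) (hsu : s ≠ u) {A : ℂ} (hA : A ≠ 0)
    (heq : A * RVB.Tsum ν μ s u 1 1 * (A * RVB.Tsum ν μ s u 2 2)
      = A * RVB.Tsum ν μ s u 1 2 * (A * RVB.Tsum ν μ s u 2 1)) : False := by
  have hlt := RVB.counts_lt ν μ hν hμ hμ' s u hsu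
  set m11 := ((Finset.powersetCard μ (Finset.univ : Finset (Fin ν))).filter
      (fun R => s ∈ R ∧ u ∈ R)).card with hm11
  set ms := ((Finset.powersetCard μ (Finset.univ : Finset (Fin ν))).filter
      (fun R => s ∈ R)).card with hms
  set mu := ((Finset.powersetCard μ (Finset.univ : Finset (Fin ν))).filter
      (fun R => u ∈ R)).card with hmu
  set m := (Finset.powersetCard μ (Finset.univ : Finset (Fin ν))).card with hm
  rw [RVB.Tsum_expand ν μ s u hsu, RVB.Tsum_expand ν μ s u hsu, RVB.Tsum_expand ν μ s u hsu,
    RVB.Tsum_expand ν μ s u hsu, ← hm11, ← hms, ← hmu, ← hm] at heq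
  have h3 : (A*A) * ((m:ℂ)*((m11:ℂ)+(ms:ℂ)+(mu:ℂ)+(m:ℂ)))
      = (A*A)*(((mu:ℂ)+(m:ℂ))*((ms:ℂ)+(m:ℂ))) := by linear_combination heq
  have h4 := mul_left_cancel₀ (mul_ne_zero hA hA) h3
  have h5 : m*(m11+ms+mu+m) = (mu+m)*(ms+m) := by exact_mod_cast h4
  nlinarith [hlt, h5]

lemma RVB.eval_congr_vars {n : ℕ} (p : MvPolynomial (Fin n) ℂ) (x y : Fin n → ℂ)
    (h : ∀ i ∈ p.vars, x i = y i) : eval x p = eval y p := by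
  rw [eval_eq, eval_eq]
  refine Finset.sum_congr rfl fun d hd => ?_
  congr 1
  refine Finset.prod_congr rfl fun i hi => ?_
  rw [h i ((mem_vars i).mpr ⟨d, hd, hi⟩)]

lemma RVB.splits_minor {n : ℕ} {F : MvPolynomial (Fin n) ℂ} {E : Finset (Fin n)}
    (h : SplitsAcross F E) (v1 v2 w1 w2 : Fin n → ℂ) :
    eval (fun c => if c ∈ E then v1 c else w1 c) F
      * eval (fun c => if c ∈ E then v2 c else w2 c) F
    = eval (fun c => if c ∈ E then v1 c else w2 c) F
      * eval (fun c => if c ∈ E then v2 c else w1 c) F := by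
  obtain ⟨p, q, rfl, hp, hq⟩ := h
  have hP : ∀ v w w' : Fin n → ℂ,
      eval (fun c => if c ∈ E then v c else w c) p
        = eval (fun c => if c ∈ E then v c else w' c) p := by
    intro v w w'
    refine RVB.eval_congr_vars p _ _ fun i hi => ?_
    have : i ∈ E := hp hi
    simp [this]
  have hQ : ∀ v v' w : Fin n → ℂ,
      eval (fun c => if c ∈ E then v c else w c) q
        = eval (fun c => if c ∈ E then v' c else w c) q := by
    intro v v' w
    refine RVB.eval_congr_vars q _ _ fun i hi => ?_
    have : i ∉ E := by simpa using hq hi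
    simp [this]
  simp only [map_mul]
  rw [hP v1 w2 w1, hP v2 w1 w2, hQ v1 v2 w2, hQ v2 v1 w1]
  ring

lemma RVB.eval_wdp (ν μ : ℕ) (Ψ : Finset (Equiv.Perm (Fin ν))) (α : Equiv.Perm (Fin ν) → ℂ)
    (z : Fin (2*ν) → ℂ) :
    eval z (weightedDopedPoly ν μ Ψ α)
      = ∑ σ ∈ Ψ, α σ * ∑ R ∈ Finset.powersetCard μ (Finset.univ : Finset (Fin ν)),
          ∏ t ∈ R, (z (siteB ν (σ t)) - z (siteA ν t)) := by
  simp [weightedDopedPoly]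

lemma RVB.sum_perm_prod {ν μ : ℕ} (σ : Equiv.Perm (Fin ν)) (h : Fin ν → ℂ) :
    ∑ R ∈ Finset.powersetCard μ (Finset.univ : Finset (Fin ν)), ∏ t ∈ R, h (σ t)
      = ∑ R ∈ Finset.powersetCard μ (Finset.univ : Finset (Fin ν)), ∏ t ∈ R, h t := by
  apply Finset.sum_nbij' (i := fun R => R.image ⇑σ) (j := fun R => R.image ⇑σ.symm)
  · intro R hR
    rw [Finset.mem_powersetCard_univ] at hR ⊢
    rw [Finset.card_image_of_injective _ σ.injective, hR]
  · intro R hR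
    rw [Finset.mem_powersetCard_univ] at hR ⊢
    rw [Finset.card_image_of_injective _ σ.symm.injective, hR]
  · intro R _
    simp [Finset.image_image]
  · intro R _
    simp [Finset.image_image]
  · intro R _
    exact (Finset.prod_image fun x _ y _ hxy => σ.injective hxy).symm

/-- Evaluation point: all `B` sites get `1`, all `A` sites get `0` except `i ↦ a`, `j ↦ b`. -/
def RVB.zAA (ν : ℕ) (i j : Fin (2*ν)) (a b : ℂ) : Fin (2*ν) → ℂ :=
  fun c => if c.val % 2 = 1 then 1 else if c = i then a else if c = j then b else 0

/-- Evaluation point: all `A` sites get `-1`, all `B` sites get `0` except `i ↦ a`, `j ↦ b`. -/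
def RVB.zBB (ν : ℕ) (i j : Fin (2*ν)) (a b : ℂ) : Fin (2*ν) → ℂ :=
  fun c => if c.val % 2 = 1 then (if c = i then a else if c = j then b else 0) else -1

/-- Evaluation point: all `A` sites get `a`, all `B` sites get `b`. -/
def RVB.zAB (ν : ℕ) (a b : ℂ) : Fin (2*ν) → ℂ := fun c => if c.val % 2 = 1 then b else a

lemma RVB.siteA_eq_iff (ν : ℕ) (t s : Fin ν) : siteA ν t = siteA ν s ↔ t = s := by
  simp [siteA, Fin.ext_iff]

lemma RVB.siteB_eq_iff (ν : ℕ) (t s : Fin ν) : siteB ν t = siteB ν s ↔ t = s := by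
  simp [siteB, Fin.ext_iff]

lemma RVB.inner_zAA (ν μ : ℕ) (s u : Fin ν) (a b : ℂ) (σ : Equiv.Perm (Fin ν)) :
    (∑ R ∈ Finset.powersetCard μ (Finset.univ : Finset (Fin ν)),
      ∏ t ∈ R, (RVB.zAA ν (siteA ν s) (siteA ν u) a b (siteB ν (σ t))
        - RVB.zAA ν (siteA ν s) (siteA ν u) a b (siteA ν t)))
    = RVB.Tsum ν μ s u (1-a) (1-b) := by
  unfold RVB.Tsum
  refine Finset.sum_congr rfl fun R _ => Finset.prod_congr rfl fun t _ => ?_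
  have hBm : (siteB ν (σ t)).val % 2 = 1 := by simp only [siteB]; omega
  have hAm : ¬((siteA ν t).val % 2 = 1) := by simp only [siteA]; omega
  have hB : RVB.zAA ν (siteA ν s) (siteA ν u) a b (siteB ν (σ t)) = 1 := by
    simp [RVB.zAA, hBm]
  have hA : RVB.zAA ν (siteA ν s) (siteA ν u) a b (siteA ν t)
      = if t = s then a else if t = u then b else 0 := by
    simp [RVB.zAA, hAm, RVB.siteA_eq_iff]
  rw [hB, hA]
  by_cases h1 : t = s
  · simp [h1]
  · by_cases h2 : t = u
    · have hus : ¬u = s := fun h => h1 (h2.trans h)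
      simp [h1, h2, hus]
    · simp [h1, h2]

lemma RVB.inner_zBB (ν μ : ℕ) (s u : Fin ν) (a b : ℂ) (σ : Equiv.Perm (Fin ν)) :
    (∑ R ∈ Finset.powersetCard μ (Finset.univ : Finset (Fin ν)),
      ∏ t ∈ R, (RVB.zBB ν (siteB ν s) (siteB ν u) a b (siteB ν (σ t))
        - RVB.zBB ν (siteB ν s) (siteB ν u) a b (siteA ν t)))
    = RVB.Tsum ν μ s u (1+a) (1+b) := by
  have key : ∀ R ∈ Finset.powersetCard μ (Finset.univ : Finset (Fin ν)),
      ∏ t ∈ R, (RVB.zBB ν (siteB ν s) (siteB ν u) a b (siteB ν (σ t))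
          - RVB.zBB ν (siteB ν s) (siteB ν u) a b (siteA ν t))
      = ∏ t ∈ R, (fun r => if r = s then 1+a else if r = u then 1+b else 1) (σ t) := by
    intro R _
    refine Finset.prod_congr rfl fun t _ => ?_
    have hBm : (siteB ν (σ t)).val % 2 = 1 := by simp only [siteB]; omega
    have hAm : ¬((siteA ν t).val % 2 = 1) := by simp only [siteA]; omega
    have hA : RVB.zBB ν (siteB ν s) (siteB ν u) a b (siteA ν t) = -1 := by
      simp [RVB.zBB, hAm]
    have hB : RVB.zBB ν (siteB ν s) (siteB ν u) a b (siteB ν (σ t))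
        = if σ t = s then a else if σ t = u then b else 0 := by
      simp [RVB.zBB, hBm, RVB.siteB_eq_iff]
    rw [hA, hB]
    by_cases h1 : σ t = s
    · simp [h1]; try ring
    · by_cases h2 : σ t = u
      · have hus : ¬u = s := fun h => h1 (h2.trans h)
        simp [h1, h2, hus]; try ring
      · simp [h1, h2]; try ring
  rw [Finset.sum_congr rfl key,
    RVB.sum_perm_prod σ (fun r => if r = s then 1+a else if r = u then 1+b else 1)]
  rfl

lemma RVB.eval_zAA (ν μ : ℕ) (Ψ : Finset (Equiv.Perm (Fin ν))) (α : Equiv.Perm (Fin ν) → ℂ)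
    (s u : Fin ν) (a b : ℂ) :
    eval (RVB.zAA ν (siteA ν s) (siteA ν u) a b) (weightedDopedPoly ν μ Ψ α)
      = (∑ σ ∈ Ψ, α σ) * RVB.Tsum ν μ s u (1-a) (1-b) := by
  rw [RVB.eval_wdp]
  simp only [RVB.inner_zAA]
  rw [← Finset.sum_mul]

lemma RVB.eval_zBB (ν μ : ℕ) (Ψ : Finset (Equiv.Perm (Fin ν))) (α : Equiv.Perm (Fin ν) → ℂ)
    (s u : Fin ν) (a b : ℂ) :
    eval (RVB.zBB ν (siteB ν s) (siteB ν u) a b) (weightedDopedPoly ν μ Ψ α)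
      = (∑ σ ∈ Ψ, α σ) * RVB.Tsum ν μ s u (1+a) (1+b) := by
  rw [RVB.eval_wdp]
  simp only [RVB.inner_zBB]
  rw [← Finset.sum_mul]

lemma RVB.eval_zAB (ν μ : ℕ) (Ψ : Finset (Equiv.Perm (Fin ν))) (α : Equiv.Perm (Fin ν) → ℂ)
    (a b : ℂ) :
    eval (RVB.zAB ν a b) (weightedDopedPoly ν μ Ψ α)
      = (∑ σ ∈ Ψ, α σ) * (((Finset.powersetCard μ (Finset.univ : Finset (Fin ν))).card : ℂ)
          * (b - a)^μ) := by
  have hσ : ∀ σ : Equiv.Perm (Fin ν),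
      (∑ R ∈ Finset.powersetCard μ (Finset.univ : Finset (Fin ν)),
        ∏ t ∈ R, (RVB.zAB ν a b (siteB ν (σ t)) - RVB.zAB ν a b (siteA ν t)))
      = ((Finset.powersetCard μ (Finset.univ : Finset (Fin ν))).card : ℂ) * (b - a)^μ := by
    intro σ
    have key : ∀ R ∈ Finset.powersetCard μ (Finset.univ : Finset (Fin ν)),
        ∏ t ∈ R, (RVB.zAB ν a b (siteB ν (σ t)) - RVB.zAB ν a b (siteA ν t)) = (b-a)^μ := by
      intro R hR
      have hcard : R.card = μ := Finset.mem_powersetCard_univ.mp hR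
      have hf : ∀ t ∈ R, RVB.zAB ν a b (siteB ν (σ t)) - RVB.zAB ν a b (siteA ν t) = b - a := by
        intro t _
        have hBm : (siteB ν (σ t)).val % 2 = 1 := by simp only [siteB]; omega
        have hAm : ¬((siteA ν t).val % 2 = 1) := by simp only [siteA]; omega
        simp [RVB.zAB, hBm, hAm]
      rw [Finset.prod_congr rfl hf, Finset.prod_const, hcard]
    rw [Finset.sum_congr rfl key, Finset.sum_const, nsmul_eq_mul]
  rw [RVB.eval_wdp]
  simp only [hσ]
  rw [← Finset.sum_mul]

lemma RVB.combine_zAA (ν : ℕ) (E : Finset (Fin (2*ν))) (i j : Fin (2*ν))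
    (hiE : i ∈ E) (hjE : j ∉ E) (a b a' b' : ℂ) :
    (fun c => if c ∈ E then RVB.zAA ν i j a b c else RVB.zAA ν i j a' b' c)
      = RVB.zAA ν i j a b' := by
  funext c
  by_cases hc : c ∈ E
  · have hcj : ¬(c = j) := fun h => hjE (h ▸ hc)
    simp only [hc, if_true, RVB.zAA]
    by_cases h2 : c.val % 2 = 1 <;> by_cases hi : c = i <;> simp [h2, hi, hcj]
  · have hci : ¬(c = i) := fun h => hc (h ▸ hiE)
    have hji : ¬(j = i) := fun h => hjE (h ▸ hiE)
    simp only [hc, if_false, RVB.zAA]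
    by_cases h2 : c.val % 2 = 1 <;> by_cases hj : c = j <;> simp [h2, hj, hci, hji]

lemma RVB.combine_zBB (ν : ℕ) (E : Finset (Fin (2*ν))) (i j : Fin (2*ν))
    (hiE : i ∈ E) (hjE : j ∉ E) (a b a' b' : ℂ) :
    (fun c => if c ∈ E then RVB.zBB ν i j a b c else RVB.zBB ν i j a' b' c)
      = RVB.zBB ν i j a b' := by
  funext c
  by_cases hc : c ∈ E
  · have hcj : ¬(c = j) := fun h => hjE (h ▸ hc)
    simp only [hc, if_true, RVB.zBB]
    by_cases h2 : c.val % 2 = 1 <;> by_cases hi : c = i <;> simp [h2, hi, hcj]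
  · have hci : ¬(c = i) := fun h => hc (h ▸ hiE)
    have hji : ¬(j = i) := fun h => hjE (h ▸ hiE)
    simp only [hc, if_false, RVB.zBB]
    by_cases h2 : c.val % 2 = 1 <;> by_cases hj : c = j <;> simp [h2, hj, hci, hji]

lemma RVB.combine_zAB_even (ν : ℕ) (E : Finset (Fin (2*ν)))
    (hE : ∀ c : Fin (2*ν), c ∈ E ↔ c.val % 2 = 0) (a b a' b' : ℂ) :
    (fun c => if c ∈ E then RVB.zAB ν a b c else RVB.zAB ν a' b' c) = RVB.zAB ν a b' := by
  funext c
  by_cases hc : c ∈ E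
  · have h2 : ¬(c.val % 2 = 1) := by have := (hE c).mp hc; omega
    simp [hc, RVB.zAB, h2]
  · have h2 : c.val % 2 = 1 := by
      have := (hE c).mpr
      by_contra h
      exact hc (this (by omega))
    simp [hc, RVB.zAB, h2]

lemma RVB.combine_zAB_odd (ν : ℕ) (E : Finset (Fin (2*ν)))
    (hE : ∀ c : Fin (2*ν), c ∈ E ↔ c.val % 2 = 1) (a b a' b' : ℂ) :
    (fun c => if c ∈ E then RVB.zAB ν a b c else RVB.zAB ν a' b' c) = RVB.zAB ν a' b := by
  funext c
  by_cases hc : c ∈ E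
  · have h2 : c.val % 2 = 1 := (hE c).mp hc
    simp [hc, RVB.zAB, h2]
  · have h2 : ¬(c.val % 2 = 1) := fun h => hc ((hE c).mpr h)
    simp [hc, RVB.zAB, h2]

end Aux

/-- Theorem 4.4: for `1 ≤ μ ≤ ν−1`, nonzero weights `α` with
nonzero sum `α̂ = Σ_{ψ∈Ψ} α(ψ) ≠ 0`, the weighted doped RVB polynomial is nonzero
and splits across no nontrivial bipartition: the generalized doped RVB state
`|α⟩_h` is genuinely multipartite entangled. -/
theorem stmt_19 (ν μ : ℕ) (hν : 2 ≤ ν) (hμ : 1 ≤ μ) (hμ' : μ ≤ ν - 1)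
    (Ψ : Finset (Equiv.Perm (Fin ν))) (hΨ : Ψ.Nonempty)
    (α : Equiv.Perm (Fin ν) → ℂ)
    (hα : ∀ σ ∈ Ψ, α σ ≠ 0)
    (hsum : (∑ σ ∈ Ψ, α σ) ≠ 0) :
    weightedDopedPoly ν μ Ψ α ≠ 0 ∧
    ∀ E : Finset (Fin (2 * ν)), E.Nonempty → E ≠ Finset.univ →
      ¬ SplitsAcross (weightedDopedPoly ν μ Ψ α) E := by
  have hμν : μ ≤ ν := by omega
  have hM : (((Finset.powersetCard μ (Finset.univ : Finset (Fin ν))).card : ℂ)) ≠ 0 := by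
    rw [Finset.card_powersetCard, Finset.card_univ, Fintype.card_fin]
    exact_mod_cast (Nat.choose_pos hμν).ne'
  have h01 : eval (RVB.zAB ν 0 1) (weightedDopedPoly ν μ Ψ α) ≠ 0 := by
    rw [RVB.eval_zAB]
    simp only [sub_zero, one_pow, mul_one]
    exact mul_ne_zero hsum hM
  constructor
  · intro h0
    rw [h0, map_zero] at h01
    exact h01 rfl
  · intro E hne hnu hsp
    obtain ⟨x, hx⟩ := hne
    obtain ⟨y, hy⟩ : ∃ y, y ∉ E := by
      by_contra h
      push_neg at h
      exact hnu (Finset.eq_univ_iff_forall.mpr h)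
    by_cases hAA : (∃ i ∈ E, i.val % 2 = 0) ∧ (∃ j, j ∉ E ∧ j.val % 2 = 0)
    · -- both sides contain an A-site
      obtain ⟨⟨i, hiE, hi2⟩, ⟨j, hjE, hj2⟩⟩ := hAA
      have hiv := i.isLt
      have hjv := j.isLt
      set s : Fin ν := ⟨i.val / 2, by omega⟩ with hsdef
      set u : Fin ν := ⟨j.val / 2, by omega⟩ with hudef
      have hsi : siteA ν s = i := by
        apply Fin.ext
        simp only [siteA, hsdef]
        omega
      have huj : siteA ν u = j := by
        apply Fin.ext
        simp only [siteA, hudef]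
        omega
      have hsu : s ≠ u := fun h => hjE (by rw [← huj, ← h, hsi]; exact hiE)
      have hmin := RVB.splits_minor hsp (RVB.zAA ν i j 0 0) (RVB.zAA ν i j (-1) (-1))
        (RVB.zAA ν i j 0 0) (RVB.zAA ν i j (-1) (-1))
      rw [RVB.combine_zAA ν E i j hiE hjE 0 0 0 0,
        RVB.combine_zAA ν E i j hiE hjE (-1) (-1) (-1) (-1),
        RVB.combine_zAA ν E i j hiE hjE 0 0 (-1) (-1),
        RVB.combine_zAA ν E i j hiE hjE (-1) (-1) 0 0] at hmin
      rw [← hsi, ← huj] at hmin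
      rw [RVB.eval_zAA, RVB.eval_zAA, RVB.eval_zAA, RVB.eval_zAA] at hmin
      rw [show (1:ℂ) - 0 = 1 by norm_num, show (1:ℂ) - (-1) = 2 by norm_num] at hmin
      exact RVB.counts_contra ν μ hν hμ hμ' s u hsu hsum hmin
    · by_cases hBB : (∃ i ∈ E, i.val % 2 = 1) ∧ (∃ j, j ∉ E ∧ j.val % 2 = 1)
      · -- both sides contain a B-site
        obtain ⟨⟨i, hiE, hi2⟩, ⟨j, hjE, hj2⟩⟩ := hBB
        have hiv := i.isLt
        have hjv := j.isLt
        set s : Fin ν := ⟨i.val / 2, by omega⟩ with hsdef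
        set u : Fin ν := ⟨j.val / 2, by omega⟩ with hudef
        have hsi : siteB ν s = i := by
          apply Fin.ext
          simp only [siteB, hsdef]
          omega
        have huj : siteB ν u = j := by
          apply Fin.ext
          simp only [siteB, hudef]
          omega
        have hsu : s ≠ u := fun h => hjE (by rw [← huj, ← h, hsi]; exact hiE)
        have hmin := RVB.splits_minor hsp (RVB.zBB ν i j 0 0) (RVB.zBB ν i j 1 1)
          (RVB.zBB ν i j 0 0) (RVB.zBB ν i j 1 1)
        rw [RVB.combine_zBB ν E i j hiE hjE 0 0 0 0,
          RVB.combine_zBB ν E i j hiE hjE 1 1 1 1,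
          RVB.combine_zBB ν E i j hiE hjE 0 0 1 1,
          RVB.combine_zBB ν E i j hiE hjE 1 1 0 0] at hmin
        rw [← hsi, ← huj] at hmin
        rw [RVB.eval_zBB, RVB.eval_zBB, RVB.eval_zBB, RVB.eval_zBB] at hmin
        rw [show (1:ℂ) + 0 = 1 by norm_num, show (1:ℂ) + 1 = 2 by norm_num] at hmin
        exact RVB.counts_contra ν μ hν hμ hμ' s u hsu hsum hmin
      · -- the cut separates the sublattices
        have hE : (∀ c : Fin (2*ν), c ∈ E ↔ c.val % 2 = 0)
            ∨ (∀ c : Fin (2*ν), c ∈ E ↔ c.val % 2 = 1) := by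
          by_cases hx2 : x.val % 2 = 0
          · left
            have hAA' : ∀ j : Fin (2*ν), j ∉ E → ¬(j.val % 2 = 0) := by
              intro j hj hj2
              exact hAA ⟨⟨x, hx, hx2⟩, ⟨j, hj, hj2⟩⟩
            have hyodd : y.val % 2 = 1 := by have := hAA' y hy; omega
            intro c
            constructor
            · intro hc
              by_contra h2
              have hcodd : c.val % 2 = 1 := by omega
              exact hBB ⟨⟨c, hc, hcodd⟩, ⟨y, hy, hyodd⟩⟩
            · intro h2
              by_contra hc
              exact hAA' c hc h2
          · right
            have hx1 : x.val % 2 = 1 := by omega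
            have hBB' : ∀ j : Fin (2*ν), j ∉ E → ¬(j.val % 2 = 1) := by
              intro j hj hj2
              exact hBB ⟨⟨x, hx, hx1⟩, ⟨j, hj, hj2⟩⟩
            have hyev : y.val % 2 = 0 := by have := hBB' y hy; omega
            intro c
            constructor
            · intro hc
              by_contra h2
              exact hAA ⟨⟨c, hc, by omega⟩, ⟨y, hy, hyev⟩⟩
            · intro h2
              by_contra hc
              exact hBB' c hc h2
        have hmin := RVB.splits_minor hsp (RVB.zAB ν 0 0) (RVB.zAB ν (-1) 1)
          (RVB.zAB ν 0 0) (RVB.zAB ν (-1) 1)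
        have h00 : eval (RVB.zAB ν 0 0) (weightedDopedPoly ν μ Ψ α) = 0 := by
          rw [RVB.eval_zAB]
          rw [show (0:ℂ) - 0 = 0 by norm_num, zero_pow (by omega : μ ≠ 0)]
          ring
        have hm0 : eval (RVB.zAB ν (-1) 0) (weightedDopedPoly ν μ Ψ α) ≠ 0 := by
          rw [RVB.eval_zAB]
          rw [show (0:ℂ) - (-1) = 1 by norm_num, one_pow, mul_one]
          exact mul_ne_zero hsum hM
        cases hE with
        | inl h =>
          rw [RVB.combine_zAB_even ν E h 0 0 0 0, RVB.combine_zAB_even ν E h (-1) 1 (-1) 1,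
            RVB.combine_zAB_even ν E h 0 0 (-1) 1, RVB.combine_zAB_even ν E h (-1) 1 0 0,
            h00, zero_mul] at hmin
          exact mul_ne_zero h01 hm0 hmin.symm
        | inr h =>
          rw [RVB.combine_zAB_odd ν E h 0 0 0 0, RVB.combine_zAB_odd ν E h (-1) 1 (-1) 1,
            RVB.combine_zAB_odd ν E h 0 0 (-1) 1, RVB.combine_zAB_odd ν E h (-1) 1 0 0,
            h00, zero_mul] at hmin
          exact mul_ne_zero hm0 h01 hmin.symm
end
end
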